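/- The class of discrete fibrations in the path category EFF does not have a univalent representation. -/

import Mathlib

namespace EffPaper

/-! ### A small kit for tracking by partial computable functions.

We encode "partial computable function" via Mathlib's `Partrec` on `ℕ →. ℕ`.
`CompComputes I O` says: there is a partial computable function which, on the input
`I x`, converges and outputs `O x` (for every `x` in some index type `X`).
`CompFinds I S` says: there is a partial computable function which, on the input
`I x`, converges and outputs some element of the set `S x`. -/

def CompComputes {X : Sort*} (I O : X → ℕ) : Prop :=
  ∃ F : ℕ →. ℕ, Partrec F ∧ ∀ x, O x ∈ F (I x)

def CompFinds {X : Sort*} (I : X → ℕ) (S : X → Set ℕ) : Prop :=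
  ∃ F : ℕ →. ℕ, Partrec F ∧ ∀ x, ∃ k, k ∈ F (I x) ∧ k ∈ S x

namespace CompComputes

protected theorem id {X : Sort*} (I : X → ℕ) : CompComputes I I :=
  ⟨fun n => Part.some n, Partrec.some, fun x => Part.mem_some _⟩

protected theorem const {X : Sort*} (I : X → ℕ) (c : ℕ) : CompComputes I fun _ => c :=
  ⟨fun _ => Part.some c, (Computable.const c).partrec, fun _ => Part.mem_some _⟩

protected theorem comp {X : Sort*} {I M O : X → ℕ}
    (h₂ : CompComputes M O) (h₁ : CompComputes I M) : CompComputes I O := by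
  obtain ⟨F₁, pF₁, s₁⟩ := h₁
  obtain ⟨F₂, pF₂, s₂⟩ := h₂
  refine ⟨fun n => (F₁ n).bind F₂, pF₁.bind (pF₂.comp Computable.snd), fun x => ?_⟩
  exact Part.mem_bind_iff.mpr ⟨M x, s₁ x, s₂ x⟩

protected theorem pair {X : Sort*} {I a b : X → ℕ}
    (ha : CompComputes I a) (hb : CompComputes I b) :
    CompComputes I (fun x => Nat.pair (a x) (b x)) := by
  obtain ⟨F₁, pF₁, s₁⟩ := ha
  obtain ⟨F₂, pF₂, s₂⟩ := hb
  refine ⟨fun n => (F₁ n).bind fun u => (F₂ n).map fun v => Nat.pair u v, ?_, fun x => ?_⟩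
  · refine pF₁.bind ?_
    have : Computable₂ fun (p : ℕ × ℕ) (v : ℕ) => Nat.pair p.2 v :=
      Primrec₂.to_comp (Primrec₂.natPair.comp (Primrec.snd.comp Primrec.fst) Primrec.snd)
    exact Partrec.map (pF₂.comp Computable.fst) this
  · exact Part.mem_bind_iff.mpr ⟨a x, s₁ x, (Part.mem_map_iff _).mpr ⟨b x, s₂ x, rfl⟩⟩

protected theorem unpairL {X : Sort*} (I : X → ℕ) :
    CompComputes I (fun x => (I x).unpair.1) :=
  ⟨fun n => Part.some n.unpair.1,
    (Primrec.to_comp (Primrec.fst.comp Primrec.unpair)).partrec, fun _ => Part.mem_some _⟩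

protected theorem unpairR {X : Sort*} (I : X → ℕ) :
    CompComputes I (fun x => (I x).unpair.2) :=
  ⟨fun n => Part.some n.unpair.2,
    (Primrec.to_comp (Primrec.snd.comp Primrec.unpair)).partrec, fun _ => Part.mem_some _⟩

protected theorem projL {X : Sort*} (a b : X → ℕ) :
    CompComputes (fun x => Nat.pair (a x) (b x)) a := by
  have := CompComputes.unpairL (X := X) (fun x => Nat.pair (a x) (b x))
  simpa [Nat.unpair_pair] using this

protected theorem projR {X : Sort*} (a b : X → ℕ) :
    CompComputes (fun x => Nat.pair (a x) (b x)) b := by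
  have := CompComputes.unpairR (X := X) (fun x => Nat.pair (a x) (b x))
  simpa [Nat.unpair_pair] using this

protected theorem precomp {X Y : Sort*} {I O : X → ℕ} (h : CompComputes I O) (e : Y → X) :
    CompComputes (fun y => I (e y)) (fun y => O (e y)) := by
  obtain ⟨F, pF, s⟩ := h
  exact ⟨F, pF, fun y => s (e y)⟩

protected theorem toFinds {X : Sort*} {I o : X → ℕ} {S : X → Set ℕ}
    (h : CompComputes I o) (hm : ∀ x, o x ∈ S x) : CompFinds I S := by
  obtain ⟨F, pF, s⟩ := h
  exact ⟨F, pF, fun x => ⟨o x, s x, hm x⟩⟩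

end CompComputes

namespace CompFinds

protected theorem toComputes {X : Sort*} {I : X → ℕ} {S : X → Set ℕ} (h : CompFinds I S) :
    ∃ o : X → ℕ, (∀ x, o x ∈ S x) ∧ CompComputes I o := by
  obtain ⟨F, pF, s⟩ := h
  refine ⟨fun x => (s x).choose, fun x => (s x).choose_spec.2, F, pF, fun x => (s x).choose_spec.1⟩

/-- Reindex a `CompFinds` along `e` and chase the input through a computable function. -/
protected theorem via {Y X : Sort*} {J : X → ℕ} {S : X → Set ℕ} (h : CompFinds J S)
    {I : Y → ℕ} (e : Y → X) (hc : CompComputes I (fun y => J (e y))) :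
    CompFinds I (fun y => S (e y)) := by
  obtain ⟨o, hm, hcc⟩ := h.toComputes
  exact CompComputes.toFinds ((hcc.precomp e).comp hc) (fun y => hm (e y))

end CompFinds

end EffPaper

namespace EffPaper

open CategoryTheory

universe v u

/-! ### Path categories (Van den Berg–Moerdijk style), abstractly.

A `PathStruct` on a category is a pair of classes of maps: fibrations and equivalences.
`IsPathCategory` expresses the seven axioms of a path category. -/

structure PathStruct (C : Type u) [Category.{v} C] where
  Fib : ∀ ⦃X Y : C⦄, (X ⟶ Y) → Prop
  Eqv : ∀ ⦃X Y : C⦄, (X ⟶ Y) → Prop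

section PathCatDefs

variable {C : Type u} [Category.{v} C]

/-- `T` is a terminal object. -/
def IsTerminalObj (T : C) : Prop := ∀ Z : C, ∃ f : Z ⟶ T, ∀ g : Z ⟶ T, g = f

/-- The square with projections `p₁, p₂` is a pullback of the cospan `f, g`. -/
def IsPB {P X Y Z : C} (p₁ : P ⟶ X) (p₂ : P ⟶ Y) (f : X ⟶ Z) (g : Y ⟶ Z) : Prop :=
  p₁ ≫ f = p₂ ≫ g ∧ ∀ (Q : C) (q₁ : Q ⟶ X) (q₂ : Q ⟶ Y), q₁ ≫ f = q₂ ≫ g →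
    ∃! h : Q ⟶ P, h ≫ p₁ = q₁ ∧ h ≫ p₂ = q₂

/-- `p₁, p₂` exhibit their common domain as a binary product of `X` and `Y`. -/
def IsBinProd {P X Y : C} (p₁ : P ⟶ X) (p₂ : P ⟶ Y) : Prop :=
  ∀ (Q : C) (q₁ : Q ⟶ X) (q₂ : Q ⟶ Y), ∃! h : Q ⟶ P, h ≫ p₁ = q₁ ∧ h ≫ p₂ = q₂

variable (S : PathStruct C)

/-- `X → PX → X × X` is a path object for `X`: the first map is an equivalence, the
second (the pairing of `s` and `t` into a binary product `X × X`) is a fibration,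
and the composite is the diagonal. -/
def IsPathObj {X PX : C} (r : X ⟶ PX) (s t : PX ⟶ X) : Prop :=
  S.Eqv r ∧ r ≫ s = 𝟙 X ∧ r ≫ t = 𝟙 X ∧
  ∃ (W : C) (π₁ π₂ : W ⟶ X) (h : PX ⟶ W),
    IsBinProd π₁ π₂ ∧ h ≫ π₁ = s ∧ h ≫ π₂ = t ∧ S.Fib h

/-- A path object for `p : X ⟶ I` in the slice path category `C(I)`:
a factorisation of the fibrewise diagonal `X ⟶ X ×_I X` as an equivalence `r`
followed by a fibration. -/
def IsRelPathObj {X I PX : C} (p : X ⟶ I) (r : X ⟶ PX) (s t : PX ⟶ X) : Prop :=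
  S.Eqv r ∧ r ≫ s = 𝟙 X ∧ r ≫ t = 𝟙 X ∧ s ≫ p = t ≫ p ∧
  ∃ (W : C) (π₁ π₂ : W ⟶ X) (h : PX ⟶ W),
    IsPB π₁ π₂ p p ∧ h ≫ π₁ = s ∧ h ≫ π₂ = t ∧ S.Fib h

/-- The seven axioms for a path category. -/
structure IsPathCategory : Prop where
  fib_of_iso : ∀ {X Y : C} (f : X ⟶ Y), IsIso f → S.Fib f
  fib_comp : ∀ {X Y Z : C} (f : X ⟶ Y) (g : Y ⟶ Z), S.Fib f → S.Fib g → S.Fib (f ≫ g)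
  terminal : ∃ T : C, IsTerminalObj T ∧ ∀ (X : C) (f : X ⟶ T), S.Fib f
  pullback : ∀ {X Y Z : C} (f : X ⟶ Z) (g : Y ⟶ Z), S.Fib f →
    ∃ (P : C) (p₁ : P ⟶ X) (p₂ : P ⟶ Y), IsPB p₁ p₂ f g ∧ S.Fib p₂
  eqv_of_iso : ∀ {X Y : C} (f : X ⟶ Y), IsIso f → S.Eqv f
  two_out_of_six : ∀ {X Y Z W : C} (f : X ⟶ Y) (g : Y ⟶ Z) (h : Z ⟶ W),
    S.Eqv (f ≫ g) → S.Eqv (g ≫ h) →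
    S.Eqv f ∧ S.Eqv g ∧ S.Eqv h ∧ S.Eqv (f ≫ g ≫ h)
  path_obj : ∀ X : C, ∃ (PX : C) (r : X ⟶ PX) (s t : PX ⟶ X), IsPathObj S r s t
  triv_fib_pb : ∀ {X Y Z P : C} (f : X ⟶ Z) (g : Y ⟶ Z) (p₁ : P ⟶ X) (p₂ : P ⟶ Y),
    S.Fib f → S.Eqv f → IsPB p₁ p₂ f g → S.Fib p₂ ∧ S.Eqv p₂
  triv_fib_sect : ∀ {X Y : C} (f : X ⟶ Y), S.Fib f → S.Eqv f → ∃ s : Y ⟶ X, s ≫ f = 𝟙 Y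

/-- Two parallel maps are homotopic: `(f,g)` factors through some path object. -/
def Homotopic {Z X : C} (f g : Z ⟶ X) : Prop :=
  ∃ (PX : C) (r : X ⟶ PX) (s t : PX ⟶ X), IsPathObj S r s t ∧
    ∃ H : Z ⟶ PX, H ≫ s = f ∧ H ≫ t = g

/-- `f` and `g` are fibrewise homotopic over the codomain of `p`:
`(f,g)` factors through some path object of `p` in the slice. -/
def FibHomotopic {Z X I : C} (p : X ⟶ I) (f g : Z ⟶ X) : Prop :=
  ∃ (PX : C) (r : X ⟶ PX) (s t : PX ⟶ X), IsRelPathObj S p r s t ∧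
    ∃ H : Z ⟶ PX, H ≫ s = f ∧ H ≫ t = g

/-- `IsNTypeFib S n f` says that `f` is a fibration of `(n-2)`-types; so `n = 0`
corresponds to hlevel `-2` (trivial fibrations), `n = 1` to propositions,
`n = 2` to sets and `n = 3` to groupoids. -/
def IsNTypeFib : ℕ → ∀ ⦃Y X : C⦄, (Y ⟶ X) → Prop
  | 0, _, _, f => S.Fib f ∧ S.Eqv f
  | n+1, Y, _, f => S.Fib f ∧ ∃ (PY W : C) (r : Y ⟶ PY) (s t : PY ⟶ Y)
      (π₁ π₂ : W ⟶ Y) (h : PY ⟶ W),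
      IsRelPathObj S f r s t ∧ IsPB π₁ π₂ f f ∧ h ≫ π₁ = s ∧ h ≫ π₂ = t ∧
      IsNTypeFib n h

/-- The (strictly) commutative square with vertical fibrations `g` (left) and `f` (right),
top `top` and bottom `bot`, is a homotopy pullback: the induced map to the actual
pullback is an equivalence. -/
def IsHomotopyPB {D Cc B A : C} (g : D ⟶ Cc) (top : D ⟶ B) (f : B ⟶ A) (bot : Cc ⟶ A) :
    Prop :=
  g ≫ bot = top ≫ f ∧ ∃ (P : C) (p₁ : P ⟶ Cc) (p₂ : P ⟶ B) (h : D ⟶ P),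
    IsPB p₁ p₂ bot f ∧ h ≫ p₁ = g ∧ h ≫ p₂ = top ∧ S.Eqv h

/-- A transport structure on the fibration `p : Y ⟶ X`, relative to the path object
`(PX, r, s, t)` and the pullback `(Q, q₁, q₂)` of `s : PX ⟶ X` along `p`:
a map `Γ : Y ×_X PX ⟶ Y` with `p ∘ Γ = t ∘ q₂` and `Γ ∘ (1_Y, r ∘ p) ≃_X 1_Y`. -/
def IsTransport {Y X PX Q : C} (p : Y ⟶ X) (r : X ⟶ PX) (s t : PX ⟶ X)
    (q₁ : Q ⟶ Y) (q₂ : Q ⟶ PX) (Γ : Q ⟶ Y) : Prop :=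
  Γ ≫ p = q₂ ≫ t ∧
  ∀ j : Y ⟶ Q, j ≫ q₁ = 𝟙 Y → j ≫ q₂ = p ≫ r → FibHomotopic S p (j ≫ Γ) (𝟙 Y)

/-- A fibration `p : Y ⟶ X` is univalent: whenever `f, g : Z ⟶ X` and
`w : f*p ⟶ g*p` is an equivalence over `Z`, there is a homotopy `H` from `f` to `g`
such that `w` is fibrewise homotopic over `Z` to the map induced by `H` and a
transport structure on `p`. -/
def Univalent {Y X : C} (p : Y ⟶ X) : Prop :=
  ∀ {Z Zf Zg : C} (f g : Z ⟶ X) (a₁ : Zf ⟶ Z) (a₂ : Zf ⟶ Y) (b₁ : Zg ⟶ Z) (b₂ : Zg ⟶ Y),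
    IsPB a₁ a₂ f p → IsPB b₁ b₂ g p →
    ∀ w : Zf ⟶ Zg, w ≫ b₁ = a₁ → S.Eqv w →
    ∃ (PX Q : C) (r : X ⟶ PX) (s t : PX ⟶ X) (q₁ : Q ⟶ Y) (q₂ : Q ⟶ PX) (Γ : Q ⟶ Y)
      (H : Z ⟶ PX) (k : Zf ⟶ Q) (w' : Zf ⟶ Zg),
      IsPathObj S r s t ∧ IsPB q₁ q₂ p s ∧ IsTransport S p r s t q₁ q₂ Γ ∧
      H ≫ s = f ∧ H ≫ t = g ∧
      k ≫ q₁ = a₂ ∧ k ≫ q₂ = a₁ ≫ H ∧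
      w' ≫ b₁ = a₁ ∧ w' ≫ b₂ = k ≫ Γ ∧
      FibHomotopic S b₁ w w'

/-- `π : E ⟶ U` is a representation for the class `Small`: it is small, and every
small fibration is a homotopy pullback of it. -/
def IsRepresentation (Small : ∀ ⦃X Y : C⦄, (X ⟶ Y) → Prop) {E U : C} (π : E ⟶ U) : Prop :=
  Small π ∧ ∀ ⦃B A : C⦄ (f : B ⟶ A), Small f →
    ∃ (c : A ⟶ U) (top : B ⟶ E), IsHomotopyPB S f top π c

/-- `M` is a good lift for the universal property of the homotopy Π-type
`(pE, u₁, u₂, ε)` of `g` along `f`, at the map `h : A ⟶ X` with chosen pullback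
`(Ah, v₁, v₂)` of `h` along `f` and `m : f*h ⟶ g` over `Y`. -/
def HPiLiftGood {Y X Z E F A Ah : C} (f : Y ⟶ X) (g : Z ⟶ Y) (pE : E ⟶ X)
    (u₁ : F ⟶ E) (u₂ : F ⟶ Y) (ε : F ⟶ Z)
    (h : A ⟶ X) (v₁ : Ah ⟶ A) (v₂ : Ah ⟶ Y) (m : Ah ⟶ Z) (M : A ⟶ E) : Prop :=
  M ≫ pE = h ∧ ∀ fM : Ah ⟶ F, fM ≫ u₁ = v₁ ≫ M → fM ≫ u₂ = v₂ →
    FibHomotopic S g (fM ≫ ε) m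

/-- `(pE, u₁, u₂, ε)` is a homotopy Π-type of the fibration `g : Z ⟶ Y` along the
fibration `f : Y ⟶ X`.  Here `pE : E ⟶ X` is the Π-fibration, `(F, u₁, u₂)` is a
pullback of `pE` along `f`, and `ε : f*pE ⟶ g` is the counit (a map over `Y`). -/
structure IsHPi {Y X Z E F : C} (f : Y ⟶ X) (g : Z ⟶ Y) (pE : E ⟶ X)
    (u₁ : F ⟶ E) (u₂ : F ⟶ Y) (ε : F ⟶ Z) : Prop where
  fib : S.Fib pE
  pb : IsPB u₁ u₂ pE f
  over' : ε ≫ g = u₂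
  lift : ∀ {A Ah : C} (h : A ⟶ X) (v₁ : Ah ⟶ A) (v₂ : Ah ⟶ Y), IsPB v₁ v₂ h f →
    ∀ m : Ah ⟶ Z, m ≫ g = v₂ →
      ∃ M : A ⟶ E, HPiLiftGood S f g pE u₁ u₂ ε h v₁ v₂ m M
  unique : ∀ {A Ah : C} (h : A ⟶ X) (v₁ : Ah ⟶ A) (v₂ : Ah ⟶ Y), IsPB v₁ v₂ h f →
    ∀ m : Ah ⟶ Z, m ≫ g = v₂ → ∀ M M' : A ⟶ E,
      HPiLiftGood S f g pE u₁ u₂ ε h v₁ v₂ m M →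
      HPiLiftGood S f g pE u₁ u₂ ε h v₁ v₂ m M' →
      FibHomotopic S pE M M'

/-- The path category has homotopy Π-types. -/
def HasHPi : Prop := ∀ ⦃Y X Z : C⦄ (f : Y ⟶ X) (g : Z ⟶ Y), S.Fib f → S.Fib g →
  ∃ (E F : C) (pE : E ⟶ X) (u₁ : F ⟶ E) (u₂ : F ⟶ Y) (ε : F ⟶ Z),
    IsHPi S f g pE u₁ u₂ ε

/-- A class of small fibrations: contained in the fibrations, containing all
isomorphisms, closed under composition and stable under homotopy pullback. -/
def IsSmallClass (Small : ∀ ⦃X Y : C⦄, (X ⟶ Y) → Prop) : Prop :=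
  (∀ ⦃X Y : C⦄ (f : X ⟶ Y), Small f → S.Fib f) ∧
  (∀ ⦃X Y : C⦄ (f : X ⟶ Y), IsIso f → Small f) ∧
  (∀ ⦃X Y Z : C⦄ (f : X ⟶ Y) (g : Y ⟶ Z), Small f → Small g → Small (f ≫ g)) ∧
  (∀ ⦃D Cc B A : C⦄ (g : D ⟶ Cc) (top : D ⟶ B) (f : B ⟶ A) (bot : Cc ⟶ A),
    S.Fib g → S.Fib f → Small f → IsHomotopyPB S g top f bot → Small g)

/-- The class `Small` is closed under homotopy Π-types along arbitrary fibrations: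
it is impredicative (polymorphic). -/
def ClosedUnderHPi (Small : ∀ ⦃X Y : C⦄, (X ⟶ Y) → Prop) : Prop :=
  ∀ ⦃Y X Z : C⦄ (f : Y ⟶ X) (g : Z ⟶ Y), S.Fib f → Small g →
    ∀ ⦃E F : C⦄ (pE : E ⟶ X) (u₁ : F ⟶ E) (u₂ : F ⟶ Y) (ε : F ⟶ Z),
      IsHPi S f g pE u₁ u₂ ε → Small pE

end PathCatDefs

end EffPaper
open CategoryTheory
namespace EffPaper
-- [assume p1 kit present]

/-! ### The category `EFF`. -/

/-- An object of `EFF`: a set `A`, a realizer function `α : A → ℕ`, sets of 1-cells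
`hom a a' ⊆ ℕ`, and partial computable functions computing identity, inverse and
composite 1-cells from the realizers of the relevant data. -/
structure EffObj : Type 1 where
  A : Type
  α : A → ℕ
  hom : A → A → Set ℕ
  idc : CompFinds (fun a : A => α a) (fun a => hom a a)
  invc : CompFinds
    (fun x : {p : A × A × ℕ // p.2.2 ∈ hom p.1 p.2.1} =>
      Nat.pair (α x.1.1) (Nat.pair (α x.1.2.1) x.1.2.2))
    (fun x => hom x.1.2.1 x.1.1)
  compc : CompFinds
    (fun x : {p : A × A × A × ℕ × ℕ //
        p.2.2.2.1 ∈ hom p.1 p.2.1 ∧ p.2.2.2.2 ∈ hom p.2.1 p.2.2.1} =>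
      Nat.pair (α x.1.1) (Nat.pair (α x.1.2.1) (Nat.pair (α x.1.2.2.1)
        (Nat.pair x.1.2.2.2.1 x.1.2.2.2.2))))
    (fun x => hom x.1.1 x.1.2.2.1)

/-- The 1-cells of an object of `EFF` between `a` and `a'`. -/
def EffObj.Cell (A : EffObj) (a a' : A.A) : Type := {n : ℕ // n ∈ A.hom a a'}

/-- A morphism of `EFF`: a function on 0-cells and functions on 1-cells, both
computably tracked. -/
structure EffHom (B A : EffObj) : Type where
  f0 : B.A → A.A
  f1 : ∀ b b' : B.A, B.Cell b b' → A.Cell (f0 b) (f0 b')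
  tr0 : CompComputes (fun b : B.A => B.α b) (fun b => A.α (f0 b))
  tr1 : CompComputes
    (fun x : (b : B.A) × (b' : B.A) × B.Cell b b' =>
      Nat.pair (B.α x.1) (Nat.pair (B.α x.2.1) x.2.2.val))
    (fun x => (f1 x.1 x.2.1 x.2.2).val)

instance : Category.{0} EffObj where
  Hom B A := EffHom B A
  id A :=
    { f0 := fun a => a
      f1 := fun _ _ π => π
      tr0 := CompComputes.id _
      tr1 := (CompComputes.projR _ _).comp (CompComputes.projR _ _) }
  comp {X Y Z} f g :=
    { f0 := fun b => g.f0 (f.f0 b)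
      f1 := fun b b' π => g.f1 _ _ (f.f1 b b' π)
      tr0 := (g.tr0.precomp f.f0).comp f.tr0
      tr1 := by
        have hg := g.tr1.precomp
          (fun x : (b : X.A) × (b' : X.A) × X.Cell b b' =>
            (⟨f.f0 x.1, f.f0 x.2.1, f.f1 x.1 x.2.1 x.2.2⟩ :
              (b : Y.A) × (b' : Y.A) × Y.Cell b b'))
        refine hg.comp ?_
        refine CompComputes.pair ?_ (CompComputes.pair ?_ f.tr1)
        · exact (f.tr0.precomp (fun x : (b : X.A) × (b' : X.A) × X.Cell b b' => x.1)).comp (CompComputes.projL _ _)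
        · exact (f.tr0.precomp (fun x : (b : X.A) × (b' : X.A) × X.Cell b b' => x.2.1)).comp
            ((CompComputes.projL _ _).comp (CompComputes.projR _ _)) }

end EffPaper
namespace EffPaper
open CategoryTheory

/-! ### Homotopies, equivalences and fibrations in `EFF`. -/

/-- Two parallel maps in `EFF` are homotopic if there is a partial computable function
computing, from the realizer of each `b`, a 1-cell from `f b` to `g b`. -/
def EffHomotopic {B A : EffObj} (f g : EffHom B A) : Prop :=
  CompFinds (fun b : B.A => B.α b) (fun b => A.hom (f.f0 b) (g.f0 b))

/-- A map in `EFF` is a (homotopy) equivalence if it has a homotopy inverse. -/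
def EffEqv {B A : EffObj} (f : B ⟶ A) : Prop :=
  ∃ g : A ⟶ B, EffHomotopic (f ≫ g) (𝟙 B) ∧ EffHomotopic (g ≫ f) (𝟙 A)

/-- A map in `EFF` is a fibration: (i) 1-cells `π : f b → a` downstairs can be
computably lifted to 1-cells `ρ : b → b'` upstairs with `f b' = a`, `f ρ = π`;
(ii) given `ρ ∈ ℬ(b,b')` and `π ∈ 𝒜(fb,fb')` one can compute `ρ' ∈ ℬ(b,b')`
with `f ρ' = π`. -/
def EffFib {B A : EffObj} (f : B ⟶ A) : Prop :=
  (∃ φ ψ : ℕ →. ℕ, Partrec φ ∧ Partrec ψ ∧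
    ∀ (b : B.A) (a : A.A) (π : ℕ), π ∈ A.hom (f.f0 b) a →
      ∃ (b' : B.A) (ρ : B.Cell b b'),
        f.f0 b' = a ∧ (f.f1 b b' ρ).val = π ∧
        B.α b' ∈ φ (Nat.pair (B.α b) (Nat.pair (A.α a) π)) ∧
        ρ.val ∈ ψ (Nat.pair (B.α b) (Nat.pair (A.α a) π))) ∧
  (∃ χ : ℕ →. ℕ, Partrec χ ∧
    ∀ (b b' : B.A) (ρ : B.Cell b b') (π : ℕ), π ∈ A.hom (f.f0 b) (f.f0 b') →
      ∃ ρ' : B.Cell b b', (f.f1 b b' ρ').val = π ∧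
        ρ'.val ∈ χ (Nat.pair (B.α b) (Nat.pair (B.α b') (Nat.pair ρ.val π))))

/-- The path structure on `EFF`: fibrations and (homotopy) equivalences. -/
def EffPS : PathStruct EffObj where
  Fib := fun {_ _} f => EffFib f
  Eqv := fun {_ _} f => EffEqv f

/-- A fibration in `EFF` is a standard discrete fibration if elements of the domain
are determined by their image and their realizer. -/
def EffStdDisc {B A : EffObj} (f : B ⟶ A) : Prop :=
  EffFib f ∧ ∀ b b' : B.A, f.f0 b = f.f0 b' → B.α b = B.α b' → b = b'

/-- A fibration in `EFF` is discrete if it can be written as a standard discrete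
fibration after an equivalence. -/
def EffDisc {B A : EffObj} (f : B ⟶ A) : Prop :=
  EffFib f ∧ ∃ (B' : EffObj) (w : B ⟶ B') (g : B' ⟶ A),
    EffEqv w ∧ EffStdDisc g ∧ w ≫ g = f

end EffPaper

namespace EffPaper

open CategoryTheory

/-! In `EFF` every homotopy, whether plain, fibrewise or through a path object, is witnessed
pointwise by 1-cells, so homotopic maps agree on connected components. In particular transport
along a path in the base of a fibration moves no point out of its connected component in the
total space. If `π : E ⟶ U` were a univalent representation of the discrete fibrations, the
discrete fibration `Bool ⟶ 1` would be a pullback of `π` along some `c : 1 ⟶ U` up to an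
equivalence `Bool ≃ c*π`. The swap of `Bool` then gives a fibrewise self-equivalence of `c*π`,
which univalence realises by a transport; so the two points of `c*π` are joined in `E`, hence,
as `π` is a fibration, in `c*π`, hence in `Bool`, which is discrete. -/

namespace EffHom

variable {B A : EffObj}

theorem congr_f0 {f g : B ⟶ A} (h : f = g) (b : B.A) : EffHom.f0 f b = EffHom.f0 g b := by
  rw [h]

theorem congr_f1_val {f g : B ⟶ A} (h : f = g) (b b' : B.A) (ρ : B.Cell b b') :
    (EffHom.f1 f b b' ρ).val = (EffHom.f1 g b b' ρ).val := by
  rw [h]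

theorem ext {f g : EffHom B A} (h0 : ∀ b, f.f0 b = g.f0 b)
    (h1 : ∀ b b' (ρ : B.Cell b b'), (f.f1 b b' ρ).val = (g.f1 b b' ρ).val) : f = g := by
  obtain ⟨f0, f1, _, _⟩ := f
  obtain ⟨g0, g1, _, _⟩ := g
  obtain rfl : f0 = g0 := funext h0
  obtain rfl : f1 = g1 := funext fun b => funext fun b' => funext fun ρ => Subtype.ext (h1 b b' ρ)
  rfl

end EffHom

theorem EffObj.mem_hom_of_eq (A : EffObj) {a b a' b' : A.A} {m : ℕ} (hm : m ∈ A.hom a b)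
    (ha : a = a') (hb : b = b') : m ∈ A.hom a' b' := by
  subst ha hb
  exact hm

/-! ### Connected components -/

def EffObj.Joined (A : EffObj) (a a' : A.A) : Prop := ∃ m, m ∈ A.hom a a'

namespace EffObj.Joined

variable {A : EffObj}

theorem refl (a : A.A) : A.Joined a a := by
  obtain ⟨_, _, h⟩ := A.idc
  obtain ⟨m, -, hm⟩ := h a
  exact ⟨m, hm⟩

theorem symm {a a' : A.A} : A.Joined a a' → A.Joined a' a := by
  rintro ⟨m, hm⟩
  obtain ⟨_, _, h⟩ := A.invc
  obtain ⟨m', -, hm'⟩ := h ⟨(a, a', m), hm⟩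
  exact ⟨m', hm'⟩

theorem trans {a a' a'' : A.A} : A.Joined a a' → A.Joined a' a'' → A.Joined a a'' := by
  rintro ⟨m, hm⟩ ⟨m', hm'⟩
  obtain ⟨_, _, h⟩ := A.compc
  obtain ⟨m'', -, hm''⟩ := h ⟨(a, a', a'', m, m'), hm, hm'⟩
  exact ⟨m'', hm''⟩

end EffObj.Joined

theorem EffObj.Joined.map {B A : EffObj} {b b' : B.A} (h : B.Joined b b') (f : B ⟶ A) :
    A.Joined (EffHom.f0 f b) (EffHom.f0 f b') :=
  let ⟨m, hm⟩ := h
  ⟨_, (EffHom.f1 f b b' ⟨m, hm⟩).2⟩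

theorem EffHomotopic.joined {B A : EffObj} {f g : B ⟶ A} (h : EffHomotopic f g) (b : B.A) :
    A.Joined (EffHom.f0 f b) (EffHom.f0 g b) := by
  obtain ⟨_, _, h⟩ := h
  obtain ⟨m, -, hm⟩ := h b
  exact ⟨m, hm⟩

theorem EffEqv.joined_of_map {B A : EffObj} {f : B ⟶ A} (hf : EffEqv f) {b b' : B.A}
    (h : A.Joined (EffHom.f0 f b) (EffHom.f0 f b')) : B.Joined b b' := by
  obtain ⟨g, hfg, -⟩ := hf
  exact ((hfg.joined b).symm.trans (h.map g)).trans (hfg.joined b')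

/-! ### Homotopies -/

namespace EffHomotopic

variable {C B A : EffObj}

protected theorem refl (f : B ⟶ A) : EffHomotopic f f :=
  A.idc.via (EffHom.f0 f) f.tr0

protected theorem trans {f g h : B ⟶ A} (hfg : EffHomotopic f g) (hgh : EffHomotopic g h) :
    EffHomotopic f h := by
  obtain ⟨o₁, ho₁, t₁⟩ := hfg.toComputes
  obtain ⟨o₂, ho₂, t₂⟩ := hgh.toComputes
  exact A.compc.via
    (fun b => ⟨(EffHom.f0 f b, EffHom.f0 g b, EffHom.f0 h b, o₁ b, o₂ b), ho₁ b, ho₂ b⟩)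
    (f.tr0.pair (g.tr0.pair (h.tr0.pair (t₁.pair t₂))))

theorem whiskerLeft (f : C ⟶ B) {u v : B ⟶ A} (h : EffHomotopic u v) :
    EffHomotopic (f ≫ u) (f ≫ v) :=
  h.via (EffHom.f0 f) f.tr0

theorem whiskerRight {A' : EffObj} {u v : B ⟶ A} (h : EffHomotopic u v) (g : A ⟶ A') :
    EffHomotopic (u ≫ g) (v ≫ g) := by
  obtain ⟨o, ho, t⟩ := h.toComputes
  refine CompComputes.toFinds (o := fun b => (EffHom.f1 g _ _ ⟨o b, ho b⟩).val) ?_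
    fun b => (EffHom.f1 g _ _ _).2
  exact (g.tr1.precomp fun b => ⟨EffHom.f0 u b, EffHom.f0 v b, ⟨o b, ho b⟩⟩).comp
    (u.tr0.pair (v.tr0.pair t))

theorem comp_comp_id {f : C ⟶ B} {f' : B ⟶ C} {g : B ⟶ A} {g' : A ⟶ B}
    (hf : EffHomotopic (f ≫ f') (𝟙 C)) (hg : EffHomotopic (g ≫ g') (𝟙 B)) :
    EffHomotopic ((f ≫ g) ≫ g' ≫ f') (𝟙 C) := by
  have h := (hg.whiskerRight f').whiskerLeft f
  rw [Category.id_comp] at h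
  simpa only [Category.assoc] using h.trans hf

end EffHomotopic

theorem EffEqv.of_inv {B A : EffObj} {f : B ⟶ A} {g : A ⟶ B} (h₁ : f ≫ g = 𝟙 B)
    (h₂ : g ≫ f = 𝟙 A) : EffEqv f :=
  ⟨g, h₁ ▸ EffHomotopic.refl _, h₂ ▸ EffHomotopic.refl _⟩

theorem EffEqv.comp {C B A : EffObj} {f : C ⟶ B} {g : B ⟶ A} (hf : EffEqv f) (hg : EffEqv g) :
    EffEqv (f ≫ g) := by
  obtain ⟨f', hf₁, hf₂⟩ := hf
  obtain ⟨g', hg₁, hg₂⟩ := hg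
  exact ⟨g' ≫ f', hf₁.comp_comp_id hg₁, hg₂.comp_comp_id hf₂⟩

theorem joined_const_source {X PX : EffObj} {r : X ⟶ PX} {s : PX ⟶ X} (hr : EffEqv r)
    (hrs : r ≫ s = 𝟙 X) (ξ : PX.A) : PX.Joined ξ (EffHom.f0 r (EffHom.f0 s ξ)) := by
  obtain ⟨g, -, hgr⟩ := hr
  have h : PX.Joined (EffHom.f0 r (EffHom.f0 g ξ)) ξ := hgr.joined ξ
  have hs := h.map s
  rw [show EffHom.f0 s (EffHom.f0 r (EffHom.f0 g ξ)) = EffHom.f0 g ξ from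
    EffHom.congr_f0 hrs _] at hs
  exact h.symm.trans (hs.map r)

theorem FibHomotopic.joined {Z X I : EffObj} {p : X ⟶ I} {f g : Z ⟶ X}
    (h : FibHomotopic EffPS p f g) (z : Z.A) : X.Joined (EffHom.f0 f z) (EffHom.f0 g z) := by
  obtain ⟨PX, r, s, t, ⟨hr, hrs, hrt, -⟩, H, hHs, hHt⟩ := h
  have ht := (joined_const_source hr hrs (EffHom.f0 H z)).map t
  rw [show EffHom.f0 t (EffHom.f0 r _) = _ from EffHom.congr_f0 hrt _] at ht
  rw [← EffHom.congr_f0 hHs, ← EffHom.congr_f0 hHt]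
  exact ht.symm

theorem CompFinds.of_zero_mem {X : Sort*} (I : X → ℕ) {S : X → Set ℕ} (h : ∀ x, 0 ∈ S x) :
    CompFinds I S :=
  (CompComputes.const I 0).toFinds h

namespace EffObj

def pt : EffObj where
  A := PUnit
  α := fun _ => 0
  hom := fun _ _ => {0}
  idc := CompFinds.of_zero_mem _ fun _ => rfl
  invc := CompFinds.of_zero_mem _ fun _ => rfl
  compc := CompFinds.of_zero_mem _ fun _ => rfl

def toPt (A : EffObj) : A ⟶ pt where
  f0 := fun _ => PUnit.unit
  f1 := fun _ _ _ => ⟨0, rfl⟩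
  tr0 := CompComputes.const _ 0
  tr1 := CompComputes.const _ 0

theorem pt_hom_ext {A : EffObj} (u v : A ⟶ pt) : u = v :=
  EffHom.ext (fun _ => rfl) fun b b' ρ =>
    (EffHom.f1 u b b' ρ).2.trans (EffHom.f1 v b b' ρ).2.symm

theorem pt_joined (a a' : pt.A) : pt.Joined a a' := ⟨0, rfl⟩

def bool : EffObj where
  A := Bool
  α := Bool.toNat
  hom := fun b b' => {_n | b = b'}
  idc := CompFinds.of_zero_mem _ fun _ => rfl
  invc := CompFinds.of_zero_mem _ fun x => x.2.symm
  compc := CompFinds.of_zero_mem _ fun x => x.2.1.trans x.2.2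

theorem bool_eq_of_joined {b b' : bool.A} : bool.Joined b b' → b = b' :=
  fun ⟨_, h⟩ => h

def boolNot : bool ⟶ bool where
  f0 := fun b => !b
  f1 := fun _ _ ρ => ⟨ρ.val, congrArg (!·) ρ.2⟩
  tr0 := ⟨fun n => Part.some (1 - n),
    (Primrec.nat_sub.comp (Primrec.const 1) Primrec.id).to_comp.partrec,
    fun b => by cases b <;> exact Part.mem_some _⟩
  tr1 := (CompComputes.projR _ _).comp (CompComputes.projR _ _)

theorem boolNot_eqv : EffEqv boolNot :=
  have h : boolNot ≫ boolNot = 𝟙 bool := EffHom.ext (fun b => Bool.not_not b) fun _ _ _ => rfl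
  EffEqv.of_inv h h

theorem bool_toPt_fib : EffFib bool.toPt := by
  constructor
  · refine ⟨fun n => Part.some n.unpair.1, fun _ => Part.some 0,
      (Primrec.fst.comp Primrec.unpair).to_comp.partrec, (Computable.const 0).partrec,
      fun b _ π hπ => ⟨b, ⟨0, rfl⟩, rfl, hπ.symm, ?_, Part.mem_some 0⟩⟩
    simp only [Nat.unpair_pair, Part.mem_some_iff]
  · exact ⟨fun _ => Part.some 0, (Computable.const 0).partrec,
      fun _ _ ρ _ hπ => ⟨⟨0, ρ.2⟩, hπ.symm, Part.mem_some 0⟩⟩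

theorem bool_toPt_disc : EffDisc bool.toPt := by
  refine ⟨bool_toPt_fib, bool, 𝟙 bool, bool.toPt, EffEqv.of_inv (Category.id_comp _)
    (Category.id_comp _), ⟨bool_toPt_fib, fun b b' _ h => ?_⟩, Category.id_comp _⟩
  cases b <;> cases b' <;> simp_all [bool]

end EffObj

/-! ### Pullbacks along fibrations -/

theorem IsPB.swap {C : Type*} [Category C] {P X Y Z : C} {p₁ : P ⟶ X} {p₂ : P ⟶ Y}
    {f : X ⟶ Z} {g : Y ⟶ Z} (h : IsPB p₁ p₂ f g) : IsPB p₂ p₁ g f := by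
  refine ⟨h.1.symm, fun Q q₁ q₂ hq => ?_⟩
  obtain ⟨m, ⟨hm₁, hm₂⟩, huniq⟩ := h.2 Q q₂ q₁ hq.symm
  exact ⟨m, ⟨hm₂, hm₁⟩, fun m' hm' => huniq m' ⟨hm'.2, hm'.1⟩⟩

theorem EffFib.liftCell_finds {Y X : EffObj} {p : Y ⟶ X} (hp : EffFib p) :
    CompFinds
      (fun x : {x : Y.A × Y.A × ℕ × ℕ // x.2.2.1 ∈ Y.hom x.1 x.2.1 ∧
          x.2.2.2 ∈ X.hom (EffHom.f0 p x.1) (EffHom.f0 p x.2.1)} =>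
        Nat.pair (Y.α x.1.1) (Nat.pair (Y.α x.1.2.1) (Nat.pair x.1.2.2.1 x.1.2.2.2)))
      (fun x => {m | ∃ h : m ∈ Y.hom x.1.1 x.1.2.1, (EffHom.f1 p _ _ ⟨m, h⟩).val = x.1.2.2.2}) := by
  obtain ⟨-, χ, hχ, hlift⟩ := hp
  refine ⟨χ, hχ, fun x => ?_⟩
  obtain ⟨ρ, hρ, hmem⟩ := hlift x.1.1 x.1.2.1 ⟨x.1.2.2.1, x.2.1⟩ x.1.2.2.2 x.2.2
  exact ⟨ρ.val, hmem, ρ.2, hρ⟩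

namespace EffPullback

variable {Z Y X : EffObj} (f : Z ⟶ X) (p : Y ⟶ X)

def Pt : Type := {q : Z.A × Y.A // EffHom.f0 f q.1 = EffHom.f0 p q.2}

def code (q : Pt f p) : ℕ := Nat.pair (Z.α q.1.1) (Y.α q.1.2)

def hom (q q' : Pt f p) : Set ℕ :=
  {m | ∃ (h₁ : m.unpair.1 ∈ Z.hom q.1.1 q'.1.1) (h₂ : m.unpair.2 ∈ Y.hom q.1.2 q'.1.2),
    (EffHom.f1 f _ _ ⟨_, h₁⟩).val = (EffHom.f1 p _ _ ⟨_, h₂⟩).val}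

variable {f p}

theorem pair_mem_hom {q q' : Pt f p} {a b : ℕ} (h₁ : a ∈ Z.hom q.1.1 q'.1.1)
    (h₂ : b ∈ Y.hom q.1.2 q'.1.2)
    (he : (EffHom.f1 f _ _ ⟨a, h₁⟩).val = (EffHom.f1 p _ _ ⟨b, h₂⟩).val) :
    Nat.pair a b ∈ hom f p q q' := by
  simp only [hom, Set.mem_ofPred_eq, Nat.unpair_pair]
  exact ⟨h₁, h₂, he⟩

/-- The cell of `Y` is corrected, using that `p` is a fibration, to lie over the image of the
cell of `Z`. -/
theorem hom_finds (hp : EffFib p) {W : Sort*} {I : W → ℕ} (q q' : W → Pt f p)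
    (hq : CompComputes I fun w => code f p (q w)) (hq' : CompComputes I fun w => code f p (q' w))
    (hZ : CompFinds I fun w => Z.hom (q w).1.1 (q' w).1.1)
    (hY : CompFinds I fun w => Y.hom (q w).1.2 (q' w).1.2) :
    CompFinds I fun w => hom f p (q w) (q' w) := by
  obtain ⟨oz, hoz, tz⟩ := hZ.toComputes
  obtain ⟨oy, hoy, ty⟩ := hY.toComputes
  have tfz : CompComputes I fun w => (EffHom.f1 f _ _ ⟨oz w, hoz w⟩).val :=
    (f.tr1.precomp fun w => ⟨(q w).1.1, (q' w).1.1, ⟨oz w, hoz w⟩⟩).comp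
      (((CompComputes.projL _ _).comp hq).pair (((CompComputes.projL _ _).comp hq').pair tz))
  have hfz (w : W) : (EffHom.f1 f _ _ ⟨oz w, hoz w⟩).val ∈
      X.hom (EffHom.f0 p (q w).1.2) (EffHom.f0 p (q' w).1.2) :=
    X.mem_hom_of_eq (EffHom.f1 f _ _ _).2 (q w).2 (q' w).2
  obtain ⟨oρ, hoρ, tρ⟩ := (hp.liftCell_finds.via
    (fun w => ⟨((q w).1.2, (q' w).1.2, oy w, _), hoy w, hfz w⟩)
    (((CompComputes.projR _ _).comp hq).pair (((CompComputes.projR _ _).comp hq').pair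
      (ty.pair tfz)))).toComputes
  refine (tz.pair tρ).toFinds fun w => ?_
  obtain ⟨h, he⟩ := hoρ w
  exact pair_mem_hom (hoz w) h he.symm

variable (f p)

def obj (hp : EffFib p) : EffObj where
  A := Pt f p
  α := code f p
  hom := hom f p
  idc := hom_finds hp id id (CompComputes.id _) (CompComputes.id _)
    (Z.idc.via _ (CompComputes.projL _ _)) (Y.idc.via _ (CompComputes.projR _ _))
  invc := by
    refine hom_finds hp _ _ ((CompComputes.projL _ _).comp (CompComputes.projR _ _))
      (CompComputes.projL _ _) ?_ ?_
    · refine Z.invc.via (fun x : {x : Pt f p × Pt f p × ℕ // x.2.2 ∈ hom f p x.1 x.2.1} =>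
           ⟨(x.1.1.1.1, x.1.2.1.1.1, x.1.2.2.unpair.1), x.2.fst⟩)
        (.pair ?_ (.pair ?_ ?_))
      · exact (CompComputes.projL _ _).comp (CompComputes.projL _ _)
      · exact (CompComputes.projL _ _).comp ((CompComputes.projL _ _).comp (CompComputes.projR _ _))
      · exact (CompComputes.unpairL _).comp ((CompComputes.projR _ _).comp (CompComputes.projR _ _))
    · refine Y.invc.via (fun x : {x : Pt f p × Pt f p × ℕ // x.2.2 ∈ hom f p x.1 x.2.1} =>
           ⟨(x.1.1.1.2, x.1.2.1.1.2, x.1.2.2.unpair.2), x.2.snd.fst⟩)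
        (.pair ?_ (.pair ?_ ?_))
      · exact (CompComputes.projR _ _).comp (CompComputes.projL _ _)
      · exact (CompComputes.projR _ _).comp ((CompComputes.projL _ _).comp (CompComputes.projR _ _))
      · exact (CompComputes.unpairR _).comp ((CompComputes.projR _ _).comp (CompComputes.projR _ _))
  compc := by
    refine hom_finds hp _ _ (CompComputes.projL _ _) ((CompComputes.projL _ _).comp
      ((CompComputes.projR _ _).comp (CompComputes.projR _ _))) ?_ ?_
    · refine Z.compc.via (fun x : {x : Pt f p × Pt f p × Pt f p × ℕ × ℕ //
          x.2.2.2.1 ∈ hom f p x.1 x.2.1 ∧ x.2.2.2.2 ∈ hom f p x.2.1 x.2.2.1} =>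
          ⟨(x.1.1.1.1, x.1.2.1.1.1, x.1.2.2.1.1.1, x.1.2.2.2.1.unpair.1, x.1.2.2.2.2.unpair.1),
            x.2.1.fst, x.2.2.fst⟩) (.pair ?_ (.pair ?_ (.pair ?_ (.pair ?_ ?_))))
      · exact (CompComputes.projL _ _).comp (CompComputes.projL _ _)
      · exact (CompComputes.projL _ _).comp ((CompComputes.projL _ _).comp (CompComputes.projR _ _))
      · exact (CompComputes.projL _ _).comp ((CompComputes.projL _ _).comp
          ((CompComputes.projR _ _).comp (CompComputes.projR _ _)))
      · exact (CompComputes.unpairL _).comp ((CompComputes.projL _ _).comp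
          ((CompComputes.projR _ _).comp ((CompComputes.projR _ _).comp (CompComputes.projR _ _))))
      · exact (CompComputes.unpairL _).comp ((CompComputes.projR _ _).comp
          ((CompComputes.projR _ _).comp ((CompComputes.projR _ _).comp (CompComputes.projR _ _))))
    · refine Y.compc.via (fun x : {x : Pt f p × Pt f p × Pt f p × ℕ × ℕ //
          x.2.2.2.1 ∈ hom f p x.1 x.2.1 ∧ x.2.2.2.2 ∈ hom f p x.2.1 x.2.2.1} =>
          ⟨(x.1.1.1.2, x.1.2.1.1.2, x.1.2.2.1.1.2, x.1.2.2.2.1.unpair.2, x.1.2.2.2.2.unpair.2),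
            x.2.1.snd.fst, x.2.2.snd.fst⟩) (.pair ?_ (.pair ?_ (.pair ?_ (.pair ?_ ?_))))
      · exact (CompComputes.projR _ _).comp (CompComputes.projL _ _)
      · exact (CompComputes.projR _ _).comp ((CompComputes.projL _ _).comp (CompComputes.projR _ _))
      · exact (CompComputes.projR _ _).comp ((CompComputes.projL _ _).comp
          ((CompComputes.projR _ _).comp (CompComputes.projR _ _)))
      · exact (CompComputes.unpairR _).comp ((CompComputes.projL _ _).comp
          ((CompComputes.projR _ _).comp ((CompComputes.projR _ _).comp (CompComputes.projR _ _))))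
      · exact (CompComputes.unpairR _).comp ((CompComputes.projR _ _).comp
          ((CompComputes.projR _ _).comp ((CompComputes.projR _ _).comp (CompComputes.projR _ _))))

def fst (hp : EffFib p) : obj f p hp ⟶ Z where
  f0 := fun q => q.1.1
  f1 := fun _ _ m => ⟨m.val.unpair.1, m.2.fst⟩
  tr0 := CompComputes.projL _ _
  tr1 := (CompComputes.unpairL _).comp ((CompComputes.projR _ _).comp (CompComputes.projR _ _))

def snd (hp : EffFib p) : obj f p hp ⟶ Y where
  f0 := fun q => q.1.2
  f1 := fun _ _ m => ⟨m.val.unpair.2, m.2.snd.fst⟩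
  tr0 := CompComputes.projR _ _
  tr1 := (CompComputes.unpairR _).comp ((CompComputes.projR _ _).comp (CompComputes.projR _ _))

theorem condition (hp : EffFib p) : fst f p hp ≫ f = snd f p hp ≫ p :=
  EffHom.ext (fun q => q.2) fun _ _ m => m.2.snd.snd

variable {f p}

def lift (hp : EffFib p) {W : EffObj} (u₁ : W ⟶ Z) (u₂ : W ⟶ Y) (h : u₁ ≫ f = u₂ ≫ p) :
    W ⟶ obj f p hp where
  f0 := fun w => ⟨(EffHom.f0 u₁ w, EffHom.f0 u₂ w), EffHom.congr_f0 h w⟩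
  f1 := fun w w' ρ => ⟨Nat.pair (EffHom.f1 u₁ _ _ ρ).val (EffHom.f1 u₂ _ _ ρ).val,
    pair_mem_hom (EffHom.f1 u₁ _ _ ρ).2 (EffHom.f1 u₂ _ _ ρ).2 (EffHom.congr_f1_val h w w' ρ)⟩
  tr0 := u₁.tr0.pair u₂.tr0
  tr1 := u₁.tr1.pair u₂.tr1

theorem lift_fst (hp : EffFib p) {W : EffObj} (u₁ : W ⟶ Z) (u₂ : W ⟶ Y)
    (h : u₁ ≫ f = u₂ ≫ p) : lift hp u₁ u₂ h ≫ fst f p hp = u₁ :=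
  EffHom.ext (fun _ => rfl) fun _ _ _ => congrArg Prod.fst (Nat.unpair_pair _ _)

theorem lift_snd (hp : EffFib p) {W : EffObj} (u₁ : W ⟶ Z) (u₂ : W ⟶ Y)
    (h : u₁ ≫ f = u₂ ≫ p) : lift hp u₁ u₂ h ≫ snd f p hp = u₂ :=
  EffHom.ext (fun _ => rfl) fun _ _ _ => congrArg Prod.snd (Nat.unpair_pair _ _)

theorem joined_of_joined (hp : EffFib p) {q q' : Pt f p} (hZ : Z.Joined q.1.1 q'.1.1)
    (hY : Y.Joined q.1.2 q'.1.2) : (obj f p hp).Joined q q' := by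
  obtain ⟨a, ha⟩ := hZ
  obtain ⟨b, hb⟩ := hY
  obtain ⟨-, _, -, hlift⟩ := hp
  obtain ⟨ρ, hρ, -⟩ := hlift q.1.2 q'.1.2 ⟨b, hb⟩ (EffHom.f1 f _ _ ⟨a, ha⟩).val
    (X.mem_hom_of_eq (EffHom.f1 f _ _ _).2 q.2 q'.2)
  exact ⟨_, pair_mem_hom ha ρ.2 hρ.symm⟩

end EffPullback

theorem IsPB.joined_of_joined {Q Z Y X : EffObj} {q₁ : Q ⟶ Z} {q₂ : Q ⟶ Y} {f : Z ⟶ X}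
    {p : Y ⟶ X} (hQ : IsPB q₁ q₂ f p) (hp : EffFib p) {y y' : Q.A}
    (h₁ : Z.Joined (EffHom.f0 q₁ y) (EffHom.f0 q₁ y'))
    (h₂ : Y.Joined (EffHom.f0 q₂ y) (EffHom.f0 q₂ y')) : Q.Joined y y' := by
  obtain ⟨κ, ⟨hκ₁, hκ₂⟩, -⟩ :=
    hQ.2 _ (EffPullback.fst f p hp) (EffPullback.snd f p hp) (EffPullback.condition f p hp)
  set ι := EffPullback.lift hp q₁ q₂ hQ.1
  have hικ : ι ≫ κ = 𝟙 Q := (hQ.2 Q q₁ q₂ hQ.1).unique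
    ⟨by rw [Category.assoc, hκ₁, EffPullback.lift_fst],
      by rw [Category.assoc, hκ₂, EffPullback.lift_snd]⟩
    ⟨Category.id_comp _, Category.id_comp _⟩
  have h := (EffPullback.joined_of_joined hp (q := EffHom.f0 ι y) (q' := EffHom.f0 ι y')
    h₁ h₂).map κ
  rwa [show EffHom.f0 κ (EffHom.f0 ι y) = y from EffHom.congr_f0 hικ y,
    show EffHom.f0 κ (EffHom.f0 ι y') = y' from EffHom.congr_f0 hικ y'] at h

/-- `y` is joined to the point over the constant path at `q₁ y`, where `Γ` is homotopic to the
identity. -/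
theorem IsTransport.joined {Y X PX Q : EffObj} {p : Y ⟶ X} {r : X ⟶ PX} {s t : PX ⟶ X}
    {q₁ : Q ⟶ Y} {q₂ : Q ⟶ PX} {Γ : Q ⟶ Y} (hΓ : IsTransport EffPS p r s t q₁ q₂ Γ)
    (hp : EffFib p) (hr : EffEqv r) (hrs : r ≫ s = 𝟙 X) (hQ : IsPB q₁ q₂ p s) (y : Q.A) :
    Y.Joined (EffHom.f0 Γ y) (EffHom.f0 q₁ y) := by
  obtain ⟨j, ⟨hj₁, hj₂⟩, -⟩ := hQ.2 Y (𝟙 Y) (p ≫ r)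
    (by rw [Category.id_comp, Category.assoc, hrs, Category.comp_id])
  set e := EffHom.f0 q₁ y
  have hje₁ : EffHom.f0 q₁ (EffHom.f0 j e) = e := EffHom.congr_f0 hj₁ e
  have hje₂ : EffHom.f0 q₂ (EffHom.f0 j e) = EffHom.f0 r (EffHom.f0 p e) := EffHom.congr_f0 hj₂ e
  have hs : EffHom.f0 s (EffHom.f0 q₂ y) = EffHom.f0 p e := (EffHom.congr_f0 hQ.1 y).symm
  have hyj : Q.Joined y (EffHom.f0 j e) := by
    refine hQ.swap.joined_of_joined hp ?_ (by rw [hje₁]; exact .refl e)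
    rw [hje₂, ← hs]
    exact joined_const_source hr hrs _
  exact (hyj.map Γ).trans ((hΓ.2 j hj₁ hj₂).joined e)

/-- The class of discrete fibrations in the path category `EFF`
does not have a univalent representation. -/
theorem EFF_no_univalent_representation_of_discrete :
    ¬ ∃ (E U : EffObj) (π : E ⟶ U),
        IsRepresentation EffPS (fun {_ _} f => EffDisc f) π ∧ Univalent EffPS π := by
  rintro ⟨E, U, π, ⟨hπ, hrep⟩, huniv⟩
  obtain ⟨c, -, -, P, p₁, p₂, v, hP, -, -, hv⟩ := hrep _ EffObj.bool_toPt_disc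
  obtain ⟨v', hvv', hv'v⟩ := id hv
  set σ := v' ≫ EffObj.boolNot ≫ v
  have hσ : EffEqv σ := (show EffEqv v' from ⟨v, hv'v, hvv'⟩).comp (EffObj.boolNot_eqv.comp hv)
  obtain ⟨PX, Q, r, s, t, q₁, q₂, Γ, -, k, w, ⟨hr, hrs, -⟩, hQ, hΓ, -, -, hk₁, -, -, hw₂, hσw⟩ :=
    huniv c c p₁ p₂ p₁ p₂ hP hP σ (EffObj.pt_hom_ext _ _) hσ
  set x := EffHom.f0 v true
  have hσx : EffHom.f0 σ x = EffHom.f0 v false := by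
    have hv'x : EffHom.f0 v' x = true := EffObj.bool_eq_of_joined (hvv'.joined true)
    change EffHom.f0 v (!EffHom.f0 v' x) = _
    rw [hv'x]
    rfl
  have hE : E.Joined (EffHom.f0 p₂ (EffHom.f0 v false)) (EffHom.f0 p₂ x) := by
    have h₁ := (hσw.joined x).map p₂
    rw [hσx, show EffHom.f0 p₂ (EffHom.f0 w x) = _ from EffHom.congr_f0 hw₂ x] at h₁
    have h₂ := hΓ.joined hπ.1 hr hrs hQ (EffHom.f0 k x)
    rw [show EffHom.f0 q₁ (EffHom.f0 k x) = _ from EffHom.congr_f0 hk₁ x] at h₂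
    exact h₁.trans h₂
  exact Bool.false_ne_true <| EffObj.bool_eq_of_joined <|
    hv.joined_of_map (hP.joined_of_joined hπ.1 (EffObj.pt_joined _ _) hE)

end EffPaper
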